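/- Let k ≥ 2 and let X₁, X₂, … be i.i.d. ℝ^k-valued random vectors with E X₁ = 0, E‖X₁‖⁴ < ∞, covariance matrix Σ = Cov(X₁), and 1'Σ1 > 0. Define f_Σ(x) = δ(Σ)'·vec(xx' − Σ) for x ∈ ℝ^k. Then the estimator α_C(Σ̂_n) is asymptotically linear: √n·(α_C(Σ̂_n) − α_C(Σ)) − n^{−1/2}·Σ_{i=1}^n f_Σ(X_i) converges to 0 in probability as n → ∞. -/

import Mathlib

open MeasureTheory ProbabilityTheory Filter Matrix Finset Asymptotics

noncomputable section

open scoped Classical in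
/-- Index set for the on-and-below-diagonal entries of a `k × k` matrix;
its cardinality is `q = k(k+1)/2`. -/
abbrev SymIdx (k : ℕ) : Type := {p : Fin k × Fin k // (p.2 : ℕ) ≤ (p.1 : ℕ)}

/-- `vec(Σ)`: the vector of on-and-below-diagonal entries of a matrix. -/
def vecm {k : ℕ} (S : Matrix (Fin k) (Fin k) ℝ) : SymIdx k → ℝ := fun p => S p.1.1 p.1.2

/-- Reconstruct a symmetric matrix from its on-and-below-diagonal entries. -/
def unvec {k : ℕ} (v : SymIdx k → ℝ) : Matrix (Fin k) (Fin k) ℝ :=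
  Matrix.of fun i j =>
    if h : (j : ℕ) ≤ (i : ℕ) then v ⟨(i, j), h⟩ else v ⟨(j, i), le_of_not_ge h⟩

/-- `1'Σ1`, the sum of all entries of a matrix. -/
def oneSum {k : ℕ} (S : Matrix (Fin k) (Fin k) ℝ) : ℝ := ∑ i, ∑ j, S i j

/-- Cronbach's coefficient alpha `α_C(Σ) = (k/(k-1))·(1 - tr(Σ)/(1'Σ1))`. -/
def alphaC {k : ℕ} (S : Matrix (Fin k) (Fin k) ℝ) : ℝ :=
  ((k : ℝ) / ((k : ℝ) - 1)) * (1 - S.trace / oneSum S)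

/-- Cronbach's alpha as a function of `vec(Σ)`. -/
def alphaVec (k : ℕ) : (SymIdx k → ℝ) → ℝ := fun v => alphaC (unvec v)

/-- The gradient `δ(Σ)` of `vec(Σ) ↦ α_C(Σ)` at `vec(Σ)`. -/
def deltaVec {k : ℕ} (S : Matrix (Fin k) (Fin k) ℝ) : SymIdx k → ℝ :=
  fun p => fderiv ℝ (alphaVec k) (vecm S) (Pi.single p 1)

/-- Outer product `x x'`. -/
def outer {k : ℕ} (x : Fin k → ℝ) : Matrix (Fin k) (Fin k) ℝ := Matrix.of fun a b => x a * x b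

/-- Sample mean of the first `n` observations. -/
def sampleMean (k n : ℕ) (X : ℕ → Fin k → ℝ) : Fin k → ℝ :=
  (n : ℝ)⁻¹ • ∑ i ∈ range n, X i

/-- Sample covariance matrix of the first `n` observations. -/
def sampleCov (k n : ℕ) (X : ℕ → Fin k → ℝ) : Matrix (Fin k) (Fin k) ℝ :=
  ((n : ℝ) - 1)⁻¹ • ∑ i ∈ range n, outer (fun a => X i a - sampleMean k n X a)

/-- Convergence in distribution: weak convergence of the laws. -/
def TendstoInDistribution {Ω E : Type*} [MeasurableSpace Ω] [MeasurableSpace E]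
    [TopologicalSpace E] (μ : Measure Ω) (Y : ℕ → Ω → E) (ν : Measure E) : Prop :=
  ∀ f : BoundedContinuousFunction E ℝ,
    Tendsto (fun n => ∫ ω, f (Y n ω) ∂μ) atTop (nhds (∫ x, f x ∂ν))

/-- The multivariate Gaussian distribution with mean `0` and covariance matrix `C`
(defined as the law of `C^{1/2} Z` for a standard Gaussian vector `Z`; junk value if
`C` is not positive semidefinite). -/
def mvGauss {ι : Type*} [Fintype ι] [DecidableEq ι] (C : Matrix ι ι ℝ) : Measure (ι → ℝ) :=
  letI := Classical.propDecidable C.PosSemidef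
  if h : C.PosSemidef then
    (Measure.pi fun _ : ι => gaussianReal 0 1).map (fun x => (h.1.eigenvectorUnitary.1 *
      diagonal ((↑) ∘ (fun i => Real.sqrt (h.1.eigenvalues i))) *
      (star h.1.eigenvectorUnitary : Matrix ι ι ℝ)) *ᵥ x)
  else 0

open scoped Classical in
/-- The pooled two-sample ADF variance estimator `σ̂²` of Maydeu-Olivares et al. -/
def pooledVar2 (k1 k2 n1 n2 : ℕ) (X : ℕ → Fin k1 → ℝ) (Y : ℕ → Fin k2 → ℝ) : ℝ :=
  ((n2 : ℝ) / ((n1 : ℝ) + (n2 : ℝ))) * (((n1 : ℝ) - 1)⁻¹ * ∑ i ∈ range n1,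
      (∑ p, deltaVec (sampleCov k1 n1 X) p *
        (vecm (outer fun a => X i a - sampleMean k1 n1 X a) p
          - vecm (sampleCov k1 n1 X) p)) ^ 2)
  + ((n1 : ℝ) / ((n1 : ℝ) + (n2 : ℝ))) * (((n2 : ℝ) - 1)⁻¹ * ∑ i ∈ range n2,
      (∑ p, deltaVec (sampleCov k2 n2 Y) p *
        (vecm (outer fun a => Y i a - sampleMean k2 n2 Y a) p
          - vecm (sampleCov k2 n2 Y) p)) ^ 2)

/-- The studentized two-sample statistic `T_n = M_n / σ̂`. -/
def Tstat2 (k1 k2 n1 n2 : ℕ) (X : ℕ → Fin k1 → ℝ) (Y : ℕ → Fin k2 → ℝ) : ℝ :=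
  Real.sqrt ((n1 : ℝ) * (n2 : ℝ) / ((n1 : ℝ) + (n2 : ℝ))) *
    (alphaC (sampleCov k1 n1 X) - alphaC (sampleCov k2 n2 Y))
  / Real.sqrt (pooledVar2 k1 k2 n1 n2 X Y)

/-- The studentized statistic computed from pooled data `Z` (first `n1` vectors form
group 1, the remaining `n2` form group 2). -/
def TstatF (k n1 n2 : ℕ) (Z : Fin (n1 + n2) → Fin k → ℝ) : ℝ :=
  Tstat2 k k n1 n2
    (fun i => if h : i < n1 + n2 then Z ⟨i, h⟩ else 0)
    (fun i => if h : n1 + i < n1 + n2 then Z ⟨n1 + i, h⟩ else 0)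

/-- The permutation distribution function `R_n(x) = (N!)^{-1} Σ_π 1{T_n^π ≤ x}`. -/
def permDistF (k n1 n2 : ℕ) (Z : Fin (n1 + n2) → Fin k → ℝ) (x : ℝ) : ℝ :=
  ((n1 + n2).factorial : ℝ)⁻¹ * ∑ π : Equiv.Perm (Fin (n1 + n2)),
    if TstatF k n1 n2 (fun i => Z (π i)) ≤ x then 1 else 0

open scoped Classical in
/-- The `(1-α)`-quantile `c_n^π(α)` of the permutation distribution. -/
def permCrit (k n1 n2 : ℕ) (a : ℝ) (Z : Fin (n1 + n2) → Fin k → ℝ) : ℝ :=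
  sInf {x : ℝ | 1 - a ≤ permDistF k n1 n2 Z x}

/-- Permutation probability of `{T_n^π > c}`. -/
def permGt (k n1 n2 : ℕ) (Z : Fin (n1 + n2) → Fin k → ℝ) (c : ℝ) : ℝ :=
  ((n1 + n2).factorial : ℝ)⁻¹ * ∑ π : Equiv.Perm (Fin (n1 + n2)),
    if c < TstatF k n1 n2 (fun i => Z (π i)) then 1 else 0

open scoped Classical in
/-- Permutation probability of `{T_n^π = c}`. -/
def permEq (k n1 n2 : ℕ) (Z : Fin (n1 + n2) → Fin k → ℝ) (c : ℝ) : ℝ :=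
  ((n1 + n2).factorial : ℝ)⁻¹ * ∑ π : Equiv.Perm (Fin (n1 + n2)),
    if TstatF k n1 n2 (fun i => Z (π i)) = c then 1 else 0

open scoped Classical in
/-- The randomization constant `γ_n^π(α)` of the classical randomized permutation test. -/
def permGamma (k n1 n2 : ℕ) (a : ℝ) (Z : Fin (n1 + n2) → Fin k → ℝ) : ℝ :=
  if permEq k n1 n2 Z (permCrit k n1 n2 a Z) = 0 then 0
  else (a - permGt k n1 n2 Z (permCrit k n1 n2 a Z))
        / permEq k n1 n2 Z (permCrit k n1 n2 a Z)

open scoped Classical in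
/-- The randomized permutation test `ψ_n = 1{T_n > c_n^π(α)} + γ_n^π(α)·1{T_n = c_n^π(α)}`. -/
def permTest (k n1 n2 : ℕ) (a : ℝ) (Z : Fin (n1 + n2) → Fin k → ℝ) : ℝ :=
  (if permCrit k n1 n2 a Z < TstatF k n1 n2 Z then 1 else 0)
  + permGamma k n1 n2 a Z * (if TstatF k n1 n2 Z = permCrit k n1 n2 a Z then 1 else 0)

/-- Pooling two samples: the first `n1` observations come from `X`, the rest from `Y`. -/
def pool (k n1 : ℕ) (X Y : ℕ → Fin k → ℝ) : ℕ → Fin k → ℝ :=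
  fun i => if i < n1 then X i else Y (i - n1)

/-- The conditional parametric-bootstrap distribution function `F_n⋆(x)` of the
studentized statistic, for observed group covariance matrices `S1`, `S2`. -/
def bootCDF (k1 k2 n1 n2 : ℕ) (S1 : Matrix (Fin k1) (Fin k1) ℝ)
    (S2 : Matrix (Fin k2) (Fin k2) ℝ) (x : ℝ) : ℝ :=
  (((Measure.pi fun _ : Fin n1 => mvGauss S1).prod
      (Measure.pi fun _ : Fin n2 => mvGauss S2))
    {p | Tstat2 k1 k2 n1 n2
        (fun i => if h : i < n1 then p.1 ⟨i, h⟩ else 0)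
        (fun i => if h : i < n2 then p.2 ⟨i, h⟩ else 0) ≤ x}).toReal

/-- The bootstrap critical value `c_n⋆(α)`. -/
def bootCrit (k1 k2 n1 n2 : ℕ) (a : ℝ) (S1 : Matrix (Fin k1) (Fin k1) ℝ)
    (S2 : Matrix (Fin k2) (Fin k2) ℝ) : ℝ :=
  sInf {x : ℝ | 1 - a ≤ bootCDF k1 k2 n1 n2 S1 S2 x}

end

open scoped Topology ENNReal

/-!
The delta method. Write `Y_n = vec Σ̂_n`, `Z_i = vec(X_i X_i' - Σ)` and `L = δ(Σ)'`; `α_C` is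
differentiable at `vec Σ` because `1'Σ1 ≠ 0`. The statistic in question equals
`√n (α(Y_n) - α(vec Σ) - L(Y_n - vec Σ)) + L(√n (Y_n - vec Σ) - n^{-1/2} Σ Z_i)`.
The first term is `o_P(1)` as soon as `√n (Y_n - vec Σ)` is bounded in probability. For the
second, with `G_n = n^{-1/2} Σ X_i`, the exact identity
`√n (Y_n - vec Σ) - n^{-1/2} Σ Z_i = √n/(n-1) (vec Σ - vec(G_n G_n')) + (n-1)^{-1} n^{-1/2} Σ Z_i`
writes it as vanishing constants times sequences that are bounded in probability: by Chebyshev's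
inequality, `n^{-1/2} Σ Z_i` and `G_n` have bounded variances. The same identity shows that
`√n (Y_n - vec Σ)` is bounded in probability.
-/

section InProbability

variable {Ω ι E F : Type*} [MeasurableSpace Ω] {μ : Measure Ω} {l : Filter ι}
  [SeminormedAddCommGroup E] [SeminormedAddCommGroup F]

def BoundedInProbability (μ : Measure Ω) (l : Filter ι) (W : ι → Ω → E) : Prop :=
  ∀ η : ℝ≥0∞, 0 < η → ∃ K : ℝ, 0 < K ∧ ∀ᶠ i in l, μ {ω | K ≤ ‖W i ω‖} ≤ η

lemma tendstoInMeasure_zero_iff {V : ι → Ω → E} :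
    TendstoInMeasure μ V l 0 ↔ ∀ ε, 0 < ε → Tendsto (fun i => μ {ω | ε ≤ ‖V i ω‖}) l (𝓝 0) := by
  simp only [tendstoInMeasure_iff_norm, Pi.zero_apply, sub_zero]

lemma measure_le_of_subset_union {s a b : Set Ω} {η : ℝ≥0∞} (h : s ⊆ a ∪ b)
    (ha : μ a ≤ η / 2) (hb : μ b ≤ η / 2) : μ s ≤ η :=
  calc μ s ≤ μ a + μ b := (measure_mono h).trans (measure_union_le a b)
    _ ≤ η / 2 + η / 2 := add_le_add ha hb
    _ = η := ENNReal.add_halves η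

namespace MeasureTheory.TendstoInMeasure

lemma of_norm_le {V : ι → Ω → E} {W : ι → Ω → F} (hW : TendstoInMeasure μ W l 0)
    (h : ∀ᶠ i in l, ∀ ω, ‖V i ω‖ ≤ ‖W i ω‖) : TendstoInMeasure μ V l 0 := by
  rw [tendstoInMeasure_zero_iff] at hW ⊢
  refine fun ε hε => tendsto_of_tendsto_of_tendsto_of_le_of_le' tendsto_const_nhds (hW ε hε)
    (Eventually.of_forall fun _ => zero_le) ?_
  filter_upwards [h] with i hi
  exact measure_mono fun ω hω => le_trans hω (hi ω)

protected lemma add {V W : ι → Ω → E} (hV : TendstoInMeasure μ V l 0)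
    (hW : TendstoInMeasure μ W l 0) : TendstoInMeasure μ (fun i ω => V i ω + W i ω) l 0 := by
  rw [tendstoInMeasure_zero_iff] at hV hW ⊢
  intro ε hε
  refine tendsto_of_tendsto_of_tendsto_of_le_of_le tendsto_const_nhds
    (by simpa using (hV (ε / 2) (half_pos hε)).add (hW (ε / 2) (half_pos hε)))
    (fun _ => zero_le) fun i => (measure_mono fun ω hω => ?_).trans (measure_union_le _ _)
  by_contra h
  simp only [Set.mem_union, Set.mem_ofPred_eq, not_or, not_le] at h hω
  linarith [norm_add_le (V i ω) (W i ω)]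

lemma comp_of_tendsto {V : ι → Ω → E} {g : E → F} (hV : TendstoInMeasure μ V l 0)
    (hg : Tendsto g (𝓝 0) (𝓝 0)) : TendstoInMeasure μ (fun i ω => g (V i ω)) l 0 := by
  rw [tendstoInMeasure_zero_iff] at hV ⊢
  intro ε hε
  obtain ⟨δ, hδ, hgδ⟩ := Metric.tendsto_nhds_nhds.1 hg ε hε
  refine tendsto_of_tendsto_of_tendsto_of_le_of_le tendsto_const_nhds (hV δ hδ)
    (fun _ => zero_le) fun i => measure_mono fun ω hω => ?_
  by_contra h
  have := hgδ (x := V i ω) (by simpa using h)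
  simp only [Set.mem_ofPred_eq, dist_zero_right] at hω this
  linarith

lemma boundedInProbability {V : ι → Ω → E} (hV : TendstoInMeasure μ V l 0) :
    BoundedInProbability μ l V :=
  fun η hη => ⟨1, one_pos, (ENNReal.tendsto_nhds_zero.1
    (tendstoInMeasure_zero_iff.1 hV 1 one_pos)) η hη⟩

lemma smul_boundedInProbability [NormedSpace ℝ E] {c : ι → Ω → ℝ} {W : ι → Ω → E}
    (hc : TendstoInMeasure μ c l 0) (hW : BoundedInProbability μ l W) :
    TendstoInMeasure μ (fun i ω => c i ω • W i ω) l 0 := by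
  rw [tendstoInMeasure_zero_iff] at hc ⊢
  refine fun ε hε => ENNReal.tendsto_nhds_zero.2 fun η hη => ?_
  obtain ⟨K, hK, hWK⟩ := hW (η / 2) (ENNReal.half_pos hη.ne')
  filter_upwards [hWK, ENNReal.tendsto_nhds_zero.1 (hc (ε / K) (by positivity)) (η / 2)
    (ENNReal.half_pos hη.ne')] with i hWi hci
  refine measure_le_of_subset_union (fun ω hω => ?_) hci hWi
  by_contra h
  simp only [Set.mem_union, Set.mem_ofPred_eq, not_or, not_le, norm_smul] at h hω
  have := mul_lt_mul'' h.1 h.2 (norm_nonneg _) (norm_nonneg _)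
  rw [div_mul_cancel₀ _ hK.ne'] at this
  linarith

end MeasureTheory.TendstoInMeasure

lemma tendstoInMeasure_of_tendsto {c : ι → ℝ} (hc : Tendsto c l (𝓝 0)) :
    TendstoInMeasure μ (fun i (_ : Ω) => c i) l 0 := by
  rw [tendstoInMeasure_zero_iff]
  intro ε hε
  refine tendsto_const_nhds.congr' ?_
  filter_upwards [(tendsto_norm_zero.comp hc).eventually (gt_mem_nhds hε)] with i hi
  have hi : ¬ ε ≤ |c i| := not_le.2 hi
  simp [hi]

lemma boundedInProbability_const (x : E) : BoundedInProbability μ l (fun _ _ => x) :=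
  fun η _ => ⟨‖x‖ + 1, by positivity, Eventually.of_forall fun _ => by norm_num⟩

namespace BoundedInProbability

lemma mono {V : ι → Ω → E} {W : ι → Ω → F} (hW : BoundedInProbability μ l W)
    (h : ∀ᶠ i in l, ∀ ω, ‖V i ω‖ ≤ ‖W i ω‖) : BoundedInProbability μ l V := by
  intro η hη
  obtain ⟨K, hK, hWK⟩ := hW η hη
  refine ⟨K, hK, ?_⟩
  filter_upwards [h, hWK] with i hi hWi
  exact (measure_mono fun ω hω => le_trans hω (hi ω)).trans hWi

lemma norm {W : ι → Ω → E} (hW : BoundedInProbability μ l W) :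
    BoundedInProbability μ l (fun i ω => ‖W i ω‖) :=
  hW.mono (Eventually.of_forall fun _ _ => by simp)

protected lemma neg {W : ι → Ω → E} (hW : BoundedInProbability μ l W) :
    BoundedInProbability μ l (fun i ω => -W i ω) :=
  hW.mono (Eventually.of_forall fun _ _ => by simp)

protected lemma add {V W : ι → Ω → E} (hV : BoundedInProbability μ l V)
    (hW : BoundedInProbability μ l W) : BoundedInProbability μ l (fun i ω => V i ω + W i ω) := by
  intro η hη
  obtain ⟨K₁, hK₁, hV⟩ := hV (η / 2) (ENNReal.half_pos hη.ne')
  obtain ⟨K₂, hK₂, hW⟩ := hW (η / 2) (ENNReal.half_pos hη.ne')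
  refine ⟨K₁ + K₂, by positivity, ?_⟩
  filter_upwards [hV, hW] with i hVi hWi
  refine measure_le_of_subset_union (fun ω hω => ?_) hVi hWi
  by_contra h
  simp only [Set.mem_union, Set.mem_ofPred_eq, not_or, not_le] at h hω
  linarith [norm_add_le (V i ω) (W i ω)]

protected lemma sub {V W : ι → Ω → E} (hV : BoundedInProbability μ l V)
    (hW : BoundedInProbability μ l W) : BoundedInProbability μ l (fun i ω => V i ω - W i ω) := by
  simpa only [sub_eq_add_neg] using hV.add hW.neg

protected lemma smul [NormedSpace ℝ E] {c : ι → Ω → ℝ} {W : ι → Ω → E}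
    (hc : BoundedInProbability μ l c) (hW : BoundedInProbability μ l W) :
    BoundedInProbability μ l (fun i ω => c i ω • W i ω) := by
  intro η hη
  obtain ⟨K₁, hK₁, hc⟩ := hc (η / 2) (ENNReal.half_pos hη.ne')
  obtain ⟨K₂, hK₂, hW⟩ := hW (η / 2) (ENNReal.half_pos hη.ne')
  refine ⟨K₁ * K₂, by positivity, ?_⟩
  filter_upwards [hc, hW] with i hci hWi
  refine measure_le_of_subset_union (fun ω hω => ?_) hci hWi
  by_contra h
  simp only [Set.mem_union, Set.mem_ofPred_eq, not_or, not_le, norm_smul] at h hω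
  linarith [mul_lt_mul'' h.1 h.2 (norm_nonneg _) (norm_nonneg _)]

protected lemma sum {κ : Type*} (s : Finset κ) {W : κ → ι → Ω → E}
    (hW : ∀ j ∈ s, BoundedInProbability μ l (W j)) :
    BoundedInProbability μ l (fun i ω => ∑ j ∈ s, W j i ω) := by
  classical
  induction s using Finset.induction_on with
  | empty => simpa using boundedInProbability_const (μ := μ) (l := l) (0 : E)
  | insert j s hj ih =>
    simpa only [Finset.sum_insert hj] using
      (hW j (mem_insert_self j s)).add (ih fun j' hj' => hW j' (mem_insert_of_mem hj'))

protected lemma pi {κ : Type*} [Fintype κ] {W : ι → Ω → κ → ℝ}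
    (hW : ∀ j, BoundedInProbability μ l (fun i ω => W i ω j)) : BoundedInProbability μ l W :=
  (BoundedInProbability.sum Finset.univ fun j _ => (hW j).norm).mono <|
    Eventually.of_forall fun i ω => (pi_norm_le_iff_of_nonneg (by positivity)).2 fun j =>
      (Finset.single_le_sum (fun j _ => norm_nonneg (W i ω j)) (Finset.mem_univ j)).trans
        (le_abs_self _)

end BoundedInProbability

lemma boundedInProbability_of_variance_le [IsFiniteMeasure μ] {W : ι → Ω → ℝ} {C : ℝ}
    (hW : ∀ i, MemLp (W i) 2 μ) (hmean : ∀ i, μ[W i] = 0) (hvar : ∀ i, variance (W i) μ ≤ C) :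
    BoundedInProbability μ l W := by
  intro η hη
  obtain ⟨t, ht, htη⟩ : ∃ t : ℝ, 0 < t ∧ ENNReal.ofReal t ≤ η := by
    rcases eq_or_ne η ⊤ with rfl | hηtop
    · exact ⟨1, one_pos, le_top⟩
    · exact ⟨η.toReal, ENNReal.toReal_pos hη.ne' hηtop, (ENNReal.ofReal_toReal hηtop).le⟩
  set K := √(|C| / t) + 1
  have hK : 0 < K := by positivity
  have hCK : C / K ^ 2 ≤ t := by
    have : |C| / t < K ^ 2 := by
      nlinarith [Real.sq_sqrt (by positivity : 0 ≤ |C| / t), Real.sqrt_nonneg (|C| / t)]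
    rw [div_lt_iff₀ ht] at this
    rw [div_le_iff₀ (by positivity)]
    nlinarith [le_abs_self C]
  refine ⟨K, hK, Eventually.of_forall fun i => ?_⟩
  calc μ {ω | K ≤ ‖W i ω‖} = μ {ω | K ≤ |W i ω - μ[W i]|} := by simp [hmean i]
    _ ≤ ENNReal.ofReal (variance (W i) μ / K ^ 2) := meas_ge_le_variance_div_sq (hW i) hK
    _ ≤ ENNReal.ofReal t :=
      ENNReal.ofReal_le_ofReal <| (div_le_div_of_nonneg_right (hvar i) (by positivity)).trans hCK
    _ ≤ η := htη

end InProbability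

theorem HasFDerivAt.tendstoInMeasure_smul_remainder {Ω ι E F : Type*} [MeasurableSpace Ω]
    {μ : Measure Ω} {l : Filter ι} [NormedAddCommGroup E] [NormedSpace ℝ E]
    [NormedAddCommGroup F] [NormedSpace ℝ F] {f : E → F} {L : E →L[ℝ] F} {x₀ : E}
    (hf : HasFDerivAt f L x₀) {Y : ι → Ω → E} {r : ι → ℝ} (hr : Tendsto r l atTop)
    (hY : BoundedInProbability μ l fun i ω => r i • (Y i ω - x₀)) :
    TendstoInMeasure μ (fun i ω => r i • (f (Y i ω) - f x₀ - L (Y i ω - x₀))) l 0 := by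
  have hY₀ : TendstoInMeasure μ (fun i ω => Y i ω - x₀) l 0 := by
    refine ((tendstoInMeasure_of_tendsto (tendsto_inv_atTop_zero.comp hr)).smul_boundedInProbability
      hY).congr' ?_ EventuallyEq.rfl
    filter_upwards [hr.eventually_gt_atTop 0] with i hi
    exact .of_forall fun ω => inv_smul_smul₀ hi.ne' _
  set ρ : E → ℝ := fun h => ‖h‖⁻¹ * ‖f (x₀ + h) - f x₀ - L h‖
  have hρ : Tendsto ρ (𝓝 0) (𝓝 0) := by
    have h := (hasFDerivAt_iff_tendsto.1 hf).comp
      ((continuous_const_add x₀).tendsto' 0 x₀ (add_zero x₀))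
    simpa [ρ, Function.comp_def] using h
  -- `‖r • (f Y - f x₀ - L (Y - x₀))‖ = ρ (Y - x₀) * ‖r • (Y - x₀)‖`, which is `o_P(1) * O_P(1)`
  refine ((hY₀.comp_of_tendsto hρ).smul_boundedInProbability hY.norm).of_norm_le
    (Eventually.of_forall fun i ω => ?_)
  rcases eq_or_ne (Y i ω - x₀) 0 with h | h
  · simp [sub_eq_zero.1 h]
  · simp only [ρ, add_sub_cancel, norm_smul, norm_mul, norm_inv, norm_norm]
    field_simp
    rfl

lemma MeasureTheory.MemLp.apply_mul_apply {Ω κ : Type*} [MeasurableSpace Ω] {μ : Measure Ω}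
    [Fintype κ] {Y : Ω → κ → ℝ} (hY : MemLp Y 4 μ) (a b : κ) :
    MemLp (fun ω => Y ω a * Y ω b) 2 μ :=
  haveI : ENNReal.HolderTriple 4 4 2 :=
    ⟨by rw [← ENNReal.toReal_eq_toReal_iff'] <;> simp [ENNReal.toReal_add]; norm_num⟩
  (hY.eval b).mul (hY.eval a)

namespace ProbabilityTheory

variable {Ω : Type*} [MeasurableSpace Ω] {μ : Measure Ω} [IsProbabilityMeasure μ]

lemma boundedInProbability_inv_sqrt_smul_sum {Z : ℕ → Ω → ℝ} (hZ : MemLp (Z 0) 2 μ)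
    (hmean : μ[Z 0] = 0) (hindep : Pairwise fun i j => Z i ⟂ᵢ[μ] Z j)
    (hident : ∀ i, IdentDistrib (Z i) (Z 0) μ μ) :
    BoundedInProbability μ atTop fun (n : ℕ) ω => (√n)⁻¹ • ∑ i ∈ range n, Z i ω := by
  have hmem i : MemLp (Z i) 2 μ := (hident i).memLp_iff.2 hZ
  have hfun (n : ℕ) : (fun ω => (√n)⁻¹ • ∑ i ∈ range n, Z i ω) = (√n)⁻¹ • ∑ i ∈ range n, Z i := by
    ext ω; simp [Finset.sum_apply]
  refine boundedInProbability_of_variance_le (C := variance (Z 0) μ) (fun n => ?_) (fun n => ?_)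
    (fun n => ?_)
  · rw [hfun n]
    exact (memLp_finsetSum' _ fun i _ => hmem i).const_smul _
  · rw [integral_smul, integral_finsetSum _ fun i _ => (hmem i).integrable one_le_two]
    simp [fun i => (hident i).integral_eq, hmean]
  · rw [hfun n, variance_smul,
      IndepFun.variance_sum (fun i _ => hmem i) fun i _ j _ hij => hindep hij,
      Finset.sum_congr rfl fun i _ => (hident i).variance_eq, Finset.sum_const, Finset.card_range,
      nsmul_eq_mul, inv_pow, Real.sq_sqrt n.cast_nonneg, ← mul_assoc]
    exact mul_le_of_le_one_left (variance_nonneg _ _) (inv_mul_le_one_of_le₀ le_rfl n.cast_nonneg)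

lemma boundedInProbability_inv_sqrt_smul_sum_pi {κ : Type*} [Fintype κ] {Z : ℕ → Ω → κ → ℝ}
    (hZ : MemLp (Z 0) 2 μ) (hmean : μ[Z 0] = 0) (hindep : Pairwise fun i j => Z i ⟂ᵢ[μ] Z j)
    (hident : ∀ i, IdentDistrib (Z i) (Z 0) μ μ) :
    BoundedInProbability μ atTop fun (n : ℕ) ω => (√n)⁻¹ • ∑ i ∈ range n, Z i ω := by
  refine BoundedInProbability.pi fun j => ?_
  have hmeanj : ∫ ω, Z 0 ω j ∂μ = 0 := by
    rw [← eval_integral fun j => (hZ.eval j).integrable one_le_two, hmean, Pi.zero_apply]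
  simpa [Finset.sum_apply] using boundedInProbability_inv_sqrt_smul_sum (Z := fun i ω => Z i ω j)
    (hZ.eval j) hmeanj
    (fun i i' h => (hindep h).comp (measurable_pi_apply j) (measurable_pi_apply j))
    (fun i => (hident i).comp (measurable_pi_apply j))

end ProbabilityTheory

section SampleCovariance

variable {k : ℕ}

lemma unvec_vecm {M : Matrix (Fin k) (Fin k) ℝ} (hM : M.IsSymm) : unvec (vecm M) = M := by
  ext i j
  simp only [unvec, vecm, Matrix.of_apply]
  split
  · rfl
  · exact hM.apply i j

lemma differentiableAt_alphaVec {v : SymIdx k → ℝ} (hv : oneSum (unvec v) ≠ 0) :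
    DifferentiableAt ℝ (alphaVec k) v := by
  have hentry (i j : Fin k) : DifferentiableAt ℝ (fun v : SymIdx k → ℝ => unvec v i j) v := by
    by_cases hij : (j : ℕ) ≤ i <;>
      simp only [unvec, Matrix.of_apply, hij, dif_pos, dif_neg, not_false_eq_true] <;> fun_prop
  unfold alphaVec alphaC
  unfold oneSum Matrix.trace Matrix.diag at *
  fun_prop (disch := assumption)

lemma fderiv_alphaVec_apply (S : Matrix (Fin k) (Fin k) ℝ) (w : SymIdx k → ℝ) :
    fderiv ℝ (alphaVec k) (vecm S) w = ∑ p, deltaVec S p * w p := by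
  conv_lhs => rw [← Finset.univ_sum_single w]
  simp only [map_sum, deltaVec]
  refine Finset.sum_congr rfl fun p _ => ?_
  rw [mul_comm, ← smul_eq_mul, ← map_smul, ← Pi.single_smul, smul_eq_mul, mul_one]

lemma sampleCov_apply (n : ℕ) (x : ℕ → Fin k → ℝ) (a b : Fin k) :
    sampleCov k n x a b = ((n : ℝ) - 1)⁻¹ * (∑ i ∈ range n, x i a * x i b
      - (n : ℝ)⁻¹ * (∑ i ∈ range n, x i a) * ∑ i ∈ range n, x i b) := by
  simp only [sampleCov, sampleMean, outer, Matrix.smul_apply, Matrix.sum_apply, Matrix.of_apply,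
    Pi.smul_apply, Finset.sum_apply, smul_eq_mul]
  rcases eq_or_ne (n : ℝ) 0 with hn | hn
  · simp [Nat.cast_eq_zero.1 hn]
  congr 1
  simp only [sub_mul, mul_sub, Finset.sum_sub_distrib, ← Finset.sum_mul, ← Finset.mul_sum,
    Finset.sum_const, Finset.card_range, nsmul_eq_mul]
  field_simp
  ring

lemma norm_vecm_outer_le (x : Fin k → ℝ) : ‖vecm (outer x)‖ ≤ ‖x‖ * ‖x‖ :=
  (pi_norm_le_iff_of_nonneg (by positivity)).2 fun p =>
    norm_mul_le_of_le (norm_le_pi_norm x _) (norm_le_pi_norm x _)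

lemma isSymm_sampleCov (n : ℕ) (x : ℕ → Fin k → ℝ) : (sampleCov k n x).IsSymm :=
  Matrix.IsSymm.ext fun a b => by simp only [sampleCov_apply, mul_comm]; ring

lemma vecm_sampleCov_linearization {n : ℕ} (hn : 2 ≤ n) (x : ℕ → Fin k → ℝ)
    (S : Matrix (Fin k) (Fin k) ℝ) :
    √n • (vecm (sampleCov k n x) - vecm S) - (√n)⁻¹ • ∑ i ∈ range n, vecm (outer (x i) - S)
      = (√n / (n - 1)) • (vecm S - vecm (outer ((√n)⁻¹ • ∑ i ∈ range n, x i)))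
        + ((n : ℝ) - 1)⁻¹ • (√n)⁻¹ • ∑ i ∈ range n, vecm (outer (x i) - S) := by
  have hn₁ : (n : ℝ) - 1 ≠ 0 := by
    have : (2 : ℝ) ≤ n := by exact_mod_cast hn
    linarith
  have hsqrt : 0 < √(n : ℝ) := Real.sqrt_pos.2 (by positivity)
  set s := √(n : ℝ)
  have hns : (n : ℝ) = s ^ 2 := (Real.sq_sqrt n.cast_nonneg).symm
  ext p
  simp only [Pi.sub_apply, Pi.add_apply, Pi.smul_apply, Finset.sum_apply, vecm, outer,
    Matrix.sub_apply, Matrix.of_apply, sampleCov_apply, smul_eq_mul, Finset.sum_sub_distrib,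
    Finset.sum_const, Finset.card_range, nsmul_eq_mul]
  rw [hns] at hn₁ ⊢
  field_simp
  ring

end SampleCovariance

section IID

variable {Ω : Type*} [MeasurableSpace Ω] {μ : Measure Ω} [IsProbabilityMeasure μ] {k : ℕ}
  {X : ℕ → Ω → (Fin k → ℝ)} {S : Matrix (Fin k) (Fin k) ℝ}

lemma boundedInProbability_inv_sqrt_smul_sum_vecm_outer_sub (hindep : iIndepFun X μ)
    (hident : ∀ i, IdentDistrib (X i) (X 0) μ μ) (hX : MemLp (X 0) 4 μ)
    (hS : ∀ a b, S a b = ∫ ω, X 0 ω a * X 0 ω b ∂μ) :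
    BoundedInProbability μ atTop
      fun (n : ℕ) ω => (√n)⁻¹ • ∑ i ∈ range n, vecm (outer (X i ω) - S) := by
  have hg : Measurable fun x : Fin k → ℝ => vecm (outer x - S) := by
    refine measurable_pi_lambda _ fun p => ?_
    simp only [vecm, outer, Matrix.sub_apply, Matrix.of_apply]
    fun_prop
  have hmem : MemLp (fun ω => vecm (outer (X 0 ω) - S)) 2 μ :=
    memLp_pi_iff.2 fun p => (hX.apply_mul_apply _ _).sub (memLp_const _)
  refine boundedInProbability_inv_sqrt_smul_sum_pi (Z := fun i ω => vecm (outer (X i ω) - S)) hmem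
    ?_ (fun i j h => (hindep.indepFun h).comp hg hg) fun i => (hident i).comp hg
  ext p
  rw [eval_integral fun p => (hmem.eval p).integrable one_le_two]
  simp only [vecm, outer, Matrix.sub_apply, Matrix.of_apply, Pi.zero_apply]
  rw [integral_sub ((hX.apply_mul_apply _ _).integrable one_le_two) (integrable_const _),
    ← hS, integral_const, probReal_univ, one_smul, sub_self]

lemma tendstoInMeasure_sampleCov_linearization (hindep : iIndepFun X μ)
    (hident : ∀ i, IdentDistrib (X i) (X 0) μ μ) (hmean : ∀ a, ∫ ω, X 0 ω a ∂μ = 0)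
    (hX : MemLp (X 0) 4 μ) (hS : ∀ a b, S a b = ∫ ω, X 0 ω a * X 0 ω b ∂μ) :
    TendstoInMeasure μ (fun (n : ℕ) ω => √n • (vecm (sampleCov k n fun i => X i ω) - vecm S)
      - (√n)⁻¹ • ∑ i ∈ range n, vecm (outer (X i ω) - S)) atTop 0 := by
  have hG : BoundedInProbability μ atTop fun (n : ℕ) ω => (√n)⁻¹ • ∑ i ∈ range n, X i ω := by
    refine boundedInProbability_inv_sqrt_smul_sum_pi (hX.mono_exponent (by norm_num)) ?_
      (fun i j h => hindep.indepFun h) hident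
    ext a
    rw [eval_integral fun a => (hX.eval a).integrable (by norm_num), hmean, Pi.zero_apply]
  have hGG : BoundedInProbability μ atTop
      fun (n : ℕ) ω => vecm (outer ((√n)⁻¹ • ∑ i ∈ range n, X i ω)) :=
    (hG.norm.smul hG).mono <| .of_forall fun _ _ =>
      (norm_vecm_outer_le _).trans_eq (norm_smul_of_nonneg (norm_nonneg _) _).symm
  have hsqrt : Tendsto (fun n : ℕ => (√n)⁻¹) atTop (𝓝 0) :=
    tendsto_inv_atTop_zero.comp (Real.tendsto_sqrt_atTop.comp tendsto_natCast_atTop_atTop)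
  have hn₁ : Tendsto (fun n : ℕ => ((n : ℝ) - 1)⁻¹) atTop (𝓝 0) :=
    (tendsto_atTop_add_const_right _ _ tendsto_natCast_atTop_atTop).inv_tendsto_atTop
  have hc : Tendsto (fun n : ℕ => √n / ((n : ℝ) - 1)) atTop (𝓝 0) := by
    have h := hsqrt.mul (tendsto_natCast_div_add_atTop (-1 : ℝ))
    rw [zero_mul] at h
    refine h.congr' ?_
    filter_upwards [eventually_ge_atTop 1] with n hn
    have : √(n : ℝ) ≠ 0 := Real.sqrt_ne_zero'.2 (by exact_mod_cast hn)
    rw [← sub_eq_add_neg]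
    nth_rw 2 [← Real.mul_self_sqrt n.cast_nonneg]
    field_simp
  refine (((tendstoInMeasure_of_tendsto hc).smul_boundedInProbability
      ((boundedInProbability_const (vecm S)).sub hGG)).add
    ((tendstoInMeasure_of_tendsto hn₁).smul_boundedInProbability
      (boundedInProbability_inv_sqrt_smul_sum_vecm_outer_sub hindep hident hX hS))).congr' ?_ .rfl
  filter_upwards [eventually_ge_atTop 2] with n hn
  exact .of_forall fun ω => (vecm_sampleCov_linearization hn _ S).symm

end IID

theorem cronbachAlpha_asymptoticallyLinear_general
    {Ω : Type*} [MeasurableSpace Ω] (μ : MeasureTheory.Measure Ω) [IsProbabilityMeasure μ]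
    (k : ℕ) (X : ℕ → Ω → (Fin k → ℝ))
    (hindep : iIndepFun X μ)
    (hident : ∀ i, IdentDistrib (X i) (X 0) μ μ)
    (hmean : ∀ a, ∫ ω, X 0 ω a ∂μ = 0)
    (hmom : Integrable (fun ω => ‖X 0 ω‖ ^ 4) μ)
    (S : Matrix (Fin k) (Fin k) ℝ)
    (hS : ∀ a b, S a b = ∫ ω, X 0 ω a * X 0 ω b ∂μ)
    (hpos : 0 < oneSum S) :
    TendstoInMeasure μ
      (fun (n : ℕ) ω =>
        Real.sqrt (n : ℝ) * (alphaC (sampleCov k n fun i => X i ω) - alphaC S)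
          - (Real.sqrt (n : ℝ))⁻¹ *
            ∑ i ∈ range n, ∑ p, deltaVec S p * vecm (outer (X i ω) - S) p)
      atTop 0 := by
  have hX : MemLp (X 0) 4 μ :=
    (integrable_norm_rpow_iff (hident 0).aemeasurable_fst.aestronglyMeasurable (by norm_num)
      (by norm_num)).1 (by simpa using hmom)
  have hSsymm : S.IsSymm := Matrix.IsSymm.ext fun a b => by simp only [hS, mul_comm]
  have hα : HasFDerivAt (alphaVec k) (fderiv ℝ (alphaVec k) (vecm S)) (vecm S) :=
    (differentiableAt_alphaVec (by rw [unvec_vecm hSsymm]; exact hpos.ne')).hasFDerivAt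
  have hlin := tendstoInMeasure_sampleCov_linearization hindep hident hmean hX hS
  have hB : BoundedInProbability μ atTop
      fun (n : ℕ) ω => √n • (vecm (sampleCov k n fun i => X i ω) - vecm S) :=
    (hlin.boundedInProbability.add
      (boundedInProbability_inv_sqrt_smul_sum_vecm_outer_sub hindep hident hX hS)).mono
        (.of_forall fun n ω => by rw [sub_add_cancel])
  refine ((hα.tendstoInMeasure_smul_remainder
      (Real.tendsto_sqrt_atTop.comp tendsto_natCast_atTop_atTop) hB).add
    (hlin.comp_of_tendsto ((fderiv ℝ (alphaVec k) (vecm S)).continuous.tendsto' 0 0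
      (map_zero _)))).congr' (.of_forall fun n => .of_forall fun ω => ?_) .rfl
  simp only [Function.comp_apply, alphaVec, unvec_vecm (isSymm_sampleCov _ _), unvec_vecm hSsymm,
    map_sub, map_smul, map_sum, fderiv_alphaVec_apply, smul_eq_mul, Finset.mul_sum]
  ring

/-- asymptotic linearity of the sample Cronbach alpha,
with influence function `f_Σ(x) = δ(Σ)'·vec(xx' - Σ)`. -/
theorem cronbachAlpha_asymptoticallyLinear
    {Ω : Type*} [MeasurableSpace Ω] (μ : MeasureTheory.Measure Ω) [IsProbabilityMeasure μ]
    (k : ℕ) (X : ℕ → Ω → (Fin k → ℝ)) (hmeas : ∀ i, Measurable (X i))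
    (hindep : iIndepFun X μ)
    (hident : ∀ i, IdentDistrib (X i) (X 0) μ μ)
    (hmean : ∀ a, ∫ ω, X 0 ω a ∂μ = 0)
    (hmom : Integrable (fun ω => ‖X 0 ω‖ ^ 4) μ)
    (S : Matrix (Fin k) (Fin k) ℝ)
    (hS : ∀ a b, S a b = ∫ ω, X 0 ω a * X 0 ω b ∂μ)
    (hk : 2 ≤ k) (hpos : 0 < oneSum S) :
    TendstoInMeasure μ
      (fun (n : ℕ) ω =>
        Real.sqrt (n : ℝ) * (alphaC (sampleCov k n fun i => X i ω) - alphaC S)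
          - (Real.sqrt (n : ℝ))⁻¹ *
            ∑ i ∈ range n, ∑ p, deltaVec S p * vecm (outer (X i ω) - S) p)
      atTop 0 :=
  cronbachAlpha_asymptoticallyLinear_general μ k X hindep hident hmean hmom S hS hpos
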